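/- Let 𝒳 be a nonempty finite set, P a pmf on 𝒳 with P(x) > 0 for all x, and L_th > 0 a real number satisfying H(P) + log₂(1 + 1/√2) < L_th, where H(P) is the Shannon entropy in bits. Let Λ = {ℓ : 𝒳 → ℝ≥0 : Σ_x 2^{−ℓ(x)} ≤ 1}, and for z ≥ 0 and a pmf Q on 𝒳 set g_{z,Q,P}(x) = (1 + z²/2)·P(x) + z·√(Q(x)·P(x)). Then the infimum over ℓ ∈ Λ with E[ℓ(X)] < L_th of E[ℓ(X)] + E[ℓ(X)²]/(2·(L_th − E[ℓ(X)])) (with X ∼ P) equals the supremum over z ≥ 0 and pmfs Q on 𝒳 of Σ_x g_{z,Q,P}(x) · log₂( (Σ_{x'} g_{z,Q,P}(x')) / g_{z,Q,P}(x) ) − (z²/2)·L_th. -/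

import Mathlib

/-!
Weak duality: for admissible `ℓ`, Gibbs' inequality bounds the dual objective by
`∑ g ℓ - z² Lth / 2`; Cauchy–Schwarz bounds `∑ √(Q P) ℓ` by `√E[ℓ²]`, and AM–GM bounds
`z √E[ℓ²] - z² (Lth - E[ℓ]) / 2` by `E[ℓ²] / (2 (Lth - E[ℓ]))`.

Strong duality: the feasible set contains the Shannon code of `P`, and the average delay has
compact sublevel sets on it, so it attains its minimum at some `l`. The first-order condition at
`l` says that no Kraft code beats `l` for the weights `∇ avgDelay(l)`, in particular not the
Shannon code of these weights. For `z = √E[l²] / (Lth - E[l])` and `Q ∝ P l²` the weights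
`g_{z,Q,P}` are exactly `∇ avgDelay(l)`, so every inequality of the weak duality is tight.
-/

open Real Finset Filter Topology

lemma HasDerivAt.nonneg_of_frequently_le {φ : ℝ → ℝ} {D a : ℝ} (hφ : HasDerivAt φ D a)
    (h : ∃ᶠ t in 𝓝[>] a, φ a ≤ φ t) : 0 ≤ D := by
  have hmin : IsLocalMinOn φ {t | φ a ≤ φ t} a := eventually_mem_nhdsWithin.mono fun _ ht => ht
  simpa using hmin.hasFDerivWithinAt_nonneg hφ.hasFDerivAt.hasFDerivWithinAt
    (one_mem_posTangentConeAt_iff_frequently.2 h)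

namespace QueueingCode

noncomputable section

variable {𝒳 : Type*}

/-- `g_{z,Q,P}` -/
def dualWeight (P : 𝒳 → ℝ) (z : ℝ) (Q : 𝒳 → ℝ) (x : 𝒳) : ℝ :=
  (1 + z ^ 2 / 2) * P x + z * √(Q x * P x)

lemma dualWeight_pos {P Q : 𝒳 → ℝ} {z : ℝ} (hP : ∀ x, 0 < P x) (hz : 0 ≤ z) (x : 𝒳) :
    0 < dualWeight P z Q x := by
  have := hP x
  unfold dualWeight
  positivity

variable [Fintype 𝒳]

/-- `Λ` -/
def kraftLengths : Set (𝒳 → ℝ) := {ℓ | (∀ x, 0 ≤ ℓ x) ∧ ∑ x, (2 : ℝ) ^ (-ℓ x) ≤ 1}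

def feasibleSet (P : 𝒳 → ℝ) (Lth : ℝ) : Set (𝒳 → ℝ) :=
  kraftLengths ∩ {ℓ | ∑ x, P x * ℓ x < Lth}

def avgDelay (P : 𝒳 → ℝ) (Lth : ℝ) (ℓ : 𝒳 → ℝ) : ℝ :=
  (∑ x, P x * ℓ x) + (∑ x, P x * ℓ x ^ 2) / (2 * (Lth - ∑ x, P x * ℓ x))

def shannonLength (g : 𝒳 → ℝ) (x : 𝒳) : ℝ := logb 2 ((∑ y, g y) / g x)

def dualValue (P : 𝒳 → ℝ) (Lth z : ℝ) (Q : 𝒳 → ℝ) : ℝ :=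
  (∑ x, dualWeight P z Q x * shannonLength (dualWeight P z Q) x) - z ^ 2 / 2 * Lth

lemma shannonLength_nonneg {g : 𝒳 → ℝ} (hg : ∀ x, 0 < g x) (x : 𝒳) :
    0 ≤ shannonLength g x :=
  logb_nonneg one_lt_two <|
    (one_le_div (hg x)).2 <| single_le_sum (fun y _ => (hg y).le) (mem_univ x)

lemma two_rpow_neg_shannonLength {g : 𝒳 → ℝ} (hg : ∀ x, 0 < g x) (x : 𝒳) :
    (2 : ℝ) ^ (-shannonLength g x) = g x / ∑ y, g y := by
  have hS : 0 < ∑ y, g y := (hg x).trans_le <| single_le_sum (fun y _ => (hg y).le) (mem_univ x)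
  rw [shannonLength, ← logb_inv, inv_div, rpow_logb two_pos (by norm_num) (div_pos (hg x) hS)]

lemma shannonLength_mem_kraftLengths {g : 𝒳 → ℝ} (hg : ∀ x, 0 < g x) :
    shannonLength g ∈ kraftLengths := by
  refine ⟨shannonLength_nonneg hg, ?_⟩
  simp only [two_rpow_neg_shannonLength hg, ← sum_div]
  exact div_self_le_one _

lemma sum_mul_shannonLength_le {g ℓ : 𝒳 → ℝ} (hg : ∀ x, 0 < g x)
    (hℓ : ∑ x, (2 : ℝ) ^ (-ℓ x) ≤ 1) :
    ∑ x, g x * shannonLength g x ≤ ∑ x, g x * ℓ x := by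
  set S := ∑ y, g y
  have hlog2 : 0 < log 2 := log_pos one_lt_two
  -- `log u ≤ u - 1` at `u = S 2^(-ℓ x) / g x`
  have key : ∀ x, g x * shannonLength g x ≤ g x * ℓ x + (S * 2 ^ (-ℓ x) - g x) / log 2 := by
    intro x
    have hgx := hg x
    have hS : 0 < S := hgx.trans_le <| single_le_sum (fun y _ => (hg y).le) (mem_univ x)
    have hu := log_le_sub_one_of_pos (show 0 < S * (2 : ℝ) ^ (-ℓ x) / g x by positivity)
    rw [log_div (by positivity) hgx.ne', log_mul hS.ne' (by positivity),
      log_rpow two_pos] at hu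
    rw [shannonLength, logb, log_div hS.ne' hgx.ne', ← sub_le_iff_le_add', le_div_iff₀ hlog2]
    have := mul_le_mul_of_nonneg_left hu hgx.le
    field_simp at this ⊢
    nlinarith
  have hsum : ∑ x, (S * (2 : ℝ) ^ (-ℓ x) - g x) / log 2 ≤ 0 := by
    have hS : 0 ≤ S := sum_nonneg fun x _ => (hg x).le
    rw [← sum_div, sum_sub_distrib, ← mul_sum]
    exact div_nonpos_of_nonpos_of_nonneg (by nlinarith) hlog2.le
  calc ∑ x, g x * shannonLength g x
      ≤ ∑ x, (g x * ℓ x + (S * (2 : ℝ) ^ (-ℓ x) - g x) / log 2) := sum_le_sum fun x _ => key x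
    _ ≤ ∑ x, g x * ℓ x := by rw [sum_add_distrib]; linarith

lemma convex_kraftLengths : Convex ℝ (kraftLengths : Set (𝒳 → ℝ)) := by
  rintro ℓ ⟨hℓ0, hℓ⟩ ℓ' ⟨hℓ'0, hℓ'⟩ a b ha hb hab
  refine ⟨fun x => add_nonneg (mul_nonneg ha (hℓ0 x)) (mul_nonneg hb (hℓ'0 x)), ?_⟩
  calc ∑ x, (2 : ℝ) ^ (-(a • ℓ + b • ℓ') x)
      ≤ ∑ x, (a * (2 : ℝ) ^ (-ℓ x) + b * (2 : ℝ) ^ (-ℓ' x)) := by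
        gcongr with x
        have := (convexOn_rpow_left two_pos).2 (Set.mem_univ (-ℓ x)) (Set.mem_univ (-ℓ' x))
          ha hb hab
        convert this using 2 <;> simp only [Pi.add_apply, Pi.smul_apply, smul_eq_mul]; ring
    _ = a * ∑ x, (2 : ℝ) ^ (-ℓ x) + b * ∑ x, (2 : ℝ) ^ (-ℓ' x) := by
        rw [sum_add_distrib, mul_sum, mul_sum]
    _ ≤ 1 := by nlinarith

lemma sum_sqrt_mul_mul_le {P Q : 𝒳 → ℝ} (hP : ∀ x, 0 ≤ P x) (hQ : ∀ x, 0 ≤ Q x)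
    (hQ1 : ∑ x, Q x = 1) (ℓ : 𝒳 → ℝ) :
    ∑ x, √(Q x * P x) * ℓ x ≤ √(∑ x, P x * ℓ x ^ 2) :=
  calc ∑ x, √(Q x * P x) * ℓ x ≤ ∑ x, √(Q x) * √(P x * ℓ x ^ 2) := by
        refine sum_le_sum fun x _ => ?_
        rw [sqrt_mul (hQ x), sqrt_mul (hP x), sqrt_sq_eq_abs, mul_assoc]
        gcongr
        exact le_abs_self _
    _ ≤ √(∑ x, Q x) * √(∑ x, P x * ℓ x ^ 2) :=
        sum_sqrt_mul_sqrt_le _ hQ fun x => mul_nonneg (hP x) (sq_nonneg _)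
    _ = √(∑ x, P x * ℓ x ^ 2) := by rw [hQ1, sqrt_one, one_mul]

theorem dualValue_le_avgDelay {P Q ℓ : 𝒳 → ℝ} {Lth z : ℝ} (hP : ∀ x, 0 < P x) (hz : 0 ≤ z)
    (hQ : ∀ x, 0 ≤ Q x) (hQ1 : ∑ x, Q x = 1) (hℓ : ℓ ∈ feasibleSet P Lth) :
    dualValue P Lth z Q ≤ avgDelay P Lth ℓ := by
  obtain ⟨⟨-, hkraft⟩, hm⟩ := hℓ
  set m := ∑ x, P x * ℓ x
  set s := ∑ x, P x * ℓ x ^ 2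
  have hd : 0 < Lth - m := sub_pos.2 hm
  have hs : 0 ≤ s := sum_nonneg fun x _ => mul_nonneg (hP x).le (sq_nonneg _)
  have hgibbs := sum_mul_shannonLength_le (dualWeight_pos (Q := Q) hP hz) hkraft
  have hcs := mul_le_mul_of_nonneg_left (sum_sqrt_mul_mul_le (fun x => (hP x).le) hQ hQ1 ℓ) hz
  have hsplit : ∑ x, dualWeight P z Q x * ℓ x
      = (1 + z ^ 2 / 2) * m + z * ∑ x, √(Q x * P x) * ℓ x := by
    simp only [dualWeight, m, mul_sum, ← sum_add_distrib]
    exact sum_congr rfl fun x _ => by ring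
  have hamgm : z * √s ≤ z ^ 2 * (Lth - m) / 2 + s / (2 * (Lth - m)) := by
    rw [div_add_div _ _ two_ne_zero (by positivity), le_div_iff₀ (by positivity)]
    nlinarith [sq_nonneg (z * (Lth - m) - √s), sq_sqrt hs]
  unfold dualValue avgDelay
  nlinarith

lemma eq_zero_of_sum_mul_sq_eq_zero {P ℓ : 𝒳 → ℝ} (hP : ∀ x, 0 < P x)
    (h : ∑ x, P x * ℓ x ^ 2 = 0) : ℓ = 0 := by
  funext x
  have := (sum_eq_zero_iff_of_nonneg fun y _ => mul_nonneg (hP y).le (sq_nonneg (ℓ y))).1 h x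
    (mem_univ x)
  simpa [(hP x).ne'] using this

lemma isClosed_kraftLengths : IsClosed (kraftLengths : Set (𝒳 → ℝ)) := by
  simp only [kraftLengths, Set.ofPred_and, Set.ofPred_forall]
  refine (isClosed_iInter fun x => isClosed_le continuous_const (continuous_apply x)).inter
    (isClosed_le ?_ continuous_const)
  exact continuous_finsetSum _ fun x _ =>
    continuous_const.rpow (continuous_apply x).neg fun _ => Or.inl two_ne_zero

lemma continuousOn_avgDelay (P : 𝒳 → ℝ) (Lth : ℝ) :
    ContinuousOn (avgDelay P Lth) (feasibleSet P Lth) :=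
  ContinuousOn.add (by fun_prop) <| ContinuousOn.div (by fun_prop) (by fun_prop)
    fun _ hℓ => mul_ne_zero two_ne_zero (sub_pos.2 hℓ.2).ne'

/-- The sublevel set `{avgDelay P Lth ≤ C}` of the feasible set, with the denominator cleared
so that it is closed. -/
def delaySublevel (P : 𝒳 → ℝ) (Lth C : ℝ) : Set (𝒳 → ℝ) :=
  kraftLengths ∩ {ℓ | ∑ x, P x * ℓ x ≤ Lth ∧
    ∑ x, P x * ℓ x ^ 2 ≤ 2 * (Lth - ∑ x, P x * ℓ x) * (C - ∑ x, P x * ℓ x)}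

lemma mem_delaySublevel_iff {P ℓ : 𝒳 → ℝ} {Lth C : ℝ} (hℓ : ℓ ∈ feasibleSet P Lth) :
    ℓ ∈ delaySublevel P Lth C ↔ avgDelay P Lth ℓ ≤ C := by
  obtain ⟨hℓ, hm⟩ := hℓ
  rw [avgDelay, ← le_sub_iff_add_le', div_le_iff₀ (mul_pos two_pos (sub_pos.2 hm)), mul_comm]
  exact ⟨fun h => h.2.2, fun h => ⟨hℓ, hm.le, h⟩⟩

lemma delaySublevel_subset_feasibleSet {P : 𝒳 → ℝ} {Lth C : ℝ} (hP : ∀ x, 0 < P x)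
    (hL : 0 < Lth) : delaySublevel P Lth C ⊆ feasibleSet P Lth := by
  rintro ℓ ⟨hℓ, hmL, hs⟩
  refine ⟨hℓ, hmL.lt_of_ne fun hm => hL.ne' ?_⟩
  -- on `m = Lth` the constraint forces `∑ P ℓ² = 0`, hence `ℓ = 0` and `Lth = m = 0`
  rw [hm, sub_self, mul_zero, zero_mul] at hs
  have := eq_zero_of_sum_mul_sq_eq_zero hP
    (hs.antisymm (sum_nonneg fun x _ => mul_nonneg (hP x).le (sq_nonneg _)))
  simpa [this] using hm.symm

lemma isCompact_delaySublevel {P : 𝒳 → ℝ} {Lth C : ℝ} (hP : ∀ x, 0 < P x) (hC : 0 ≤ C) :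
    IsCompact (delaySublevel P Lth C) := by
  refine (isCompact_univ_pi fun x => isCompact_Icc (a := 0) (b := √(2 * Lth * C / P x)))
    |>.of_isClosed_subset (isClosed_kraftLengths.inter ?_) ?_
  · rw [Set.ofPred_and]
    exact (isClosed_le (by fun_prop) (by fun_prop)).inter (isClosed_le (by fun_prop) (by fun_prop))
  rintro ℓ ⟨⟨hℓ0, -⟩, hmL, hs⟩ x -
  set m := ∑ x, P x * ℓ x
  have hm0 : 0 ≤ m := sum_nonneg fun x _ => mul_nonneg (hP x).le (hℓ0 x)
  have hx : P x * ℓ x ^ 2 ≤ ∑ y, P y * ℓ y ^ 2 :=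
    single_le_sum (f := fun y => P y * ℓ y ^ 2) (fun y _ => mul_nonneg (hP y).le (sq_nonneg _))
      (mem_univ x)
  refine ⟨hℓ0 x, le_sqrt_of_sq_le ?_⟩
  rw [le_div_iff₀ (hP x)]
  nlinarith [mul_nonneg hm0 (show 0 ≤ Lth - m + C by linarith)]

theorem exists_isMinOn_avgDelay {P ℓ₀ : 𝒳 → ℝ} {Lth : ℝ} (hP : ∀ x, 0 < P x)
    (h₀ : ℓ₀ ∈ feasibleSet P Lth) :
    ∃ l ∈ feasibleSet P Lth, IsMinOn (avgDelay P Lth) (feasibleSet P Lth) l := by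
  have hm₀ : 0 ≤ ∑ x, P x * ℓ₀ x := sum_nonneg fun x _ => mul_nonneg (hP x).le (h₀.1.1 x)
  have hL : 0 < Lth := hm₀.trans_lt h₀.2
  have hC : 0 ≤ avgDelay P Lth ℓ₀ := by
    have : 0 < Lth - ∑ x, P x * ℓ₀ x := sub_pos.2 h₀.2
    have : 0 ≤ ∑ x, P x * ℓ₀ x ^ 2 := sum_nonneg fun x _ => mul_nonneg (hP x).le (sq_nonneg _)
    unfold avgDelay
    positivity
  have hsub := delaySublevel_subset_feasibleSet (C := avgDelay P Lth ℓ₀) hP hL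
  obtain ⟨l, hl, hlmin⟩ := (isCompact_delaySublevel hP hC).exists_isMinOn
    ⟨ℓ₀, (mem_delaySublevel_iff h₀).2 le_rfl⟩ ((continuousOn_avgDelay P Lth).mono hsub)
  refine ⟨l, hsub hl, isMinOn_iff.2 fun ℓ hℓ => ?_⟩
  rcases le_or_gt (avgDelay P Lth ℓ) (avgDelay P Lth ℓ₀) with hC | hC
  · exact isMinOn_iff.1 hlmin ℓ ((mem_delaySublevel_iff hℓ).2 hC)
  · exact (isMinOn_iff.1 hlmin ℓ₀ ((mem_delaySublevel_iff h₀).2 le_rfl)).trans hC.le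

def delayGrad (P : 𝒳 → ℝ) (Lth : ℝ) (l : 𝒳 → ℝ) (x : 𝒳) : ℝ :=
  (1 + (∑ y, P y * l y ^ 2) / (2 * (Lth - ∑ y, P y * l y) ^ 2)) * P x
    + P x * l x / (Lth - ∑ y, P y * l y)

lemma sum_delayGrad_mul (P l Δ : 𝒳 → ℝ) (Lth : ℝ) :
    ∑ x, delayGrad P Lth l x * Δ x
      = (1 + (∑ y, P y * l y ^ 2) / (2 * (Lth - ∑ y, P y * l y) ^ 2)) * ∑ x, P x * Δ x
        + (∑ x, P x * l x * Δ x) / (Lth - ∑ y, P y * l y) := by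
  rw [mul_sum, sum_div (s := univ) (f := fun x => P x * l x * Δ x), ← sum_add_distrib]
  exact sum_congr rfl fun x _ => by unfold delayGrad; ring

lemma hasDerivAt_avgDelay_add_smul {P l : 𝒳 → ℝ} {Lth : ℝ} (hm : ∑ x, P x * l x ≠ Lth)
    (Δ : 𝒳 → ℝ) :
    HasDerivAt (fun t : ℝ => avgDelay P Lth (l + t • Δ)) (∑ x, delayGrad P Lth l x * Δ x) 0 := by
  have hd : Lth - ∑ x, P x * l x ≠ 0 := sub_ne_zero.2 hm.symm
  have hline : ∀ x, HasDerivAt (fun t : ℝ => (l + t • Δ) x) (Δ x) 0 := fun x => by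
    simpa using ((hasDerivAt_id (0 : ℝ)).mul_const (Δ x)).const_add (l x)
  have h1 : HasDerivAt (fun t : ℝ => ∑ x, P x * (l + t • Δ) x) (∑ x, P x * Δ x) 0 :=
    HasDerivAt.fun_sum fun x _ => (hline x).const_mul (P x)
  have h2 : HasDerivAt (fun t : ℝ => ∑ x, P x * (l + t • Δ) x ^ 2)
      (∑ x, P x * (2 * l x * Δ x)) 0 :=
    HasDerivAt.fun_sum fun x _ => by simpa using ((hline x).pow 2).const_mul (P x)
  refine (h1.add (h2.div ((h1.const_sub Lth).const_mul 2) (by simpa using hd))).congr_deriv ?_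
  have h2l : ∑ x, P x * (2 * l x * Δ x) = 2 * ∑ x, P x * l x * Δ x := by
    rw [mul_sum]; exact sum_congr rfl fun x _ => by ring
  simp only [zero_smul, add_zero, sum_delayGrad_mul, h2l]
  field_simp
  ring

theorem sum_delayGrad_mul_le_of_isMinOn {P l ℓ : 𝒳 → ℝ} {Lth : ℝ} (hl : l ∈ feasibleSet P Lth)
    (hmin : IsMinOn (avgDelay P Lth) (feasibleSet P Lth) l) (hℓ : ℓ ∈ kraftLengths) :
    ∑ x, delayGrad P Lth l x * l x ≤ ∑ x, delayGrad P Lth l x * ℓ x := by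
  have hmean : ContinuousAt (fun t : ℝ => ∑ x, P x * (l + t • (ℓ - l)) x) 0 := by fun_prop
  have hnear : ∀ᶠ t in 𝓝[>] (0 : ℝ), l + t • (ℓ - l) ∈ feasibleSet P Lth := by
    filter_upwards [Ioc_mem_nhdsGT one_pos, nhdsWithin_le_nhds <|
      hmean.eventually_lt continuousAt_const (by simpa using hl.2)] with t ht hmt
    exact ⟨convex_kraftLengths.add_smul_sub_mem hl.1 hℓ ⟨ht.1.le, ht.2⟩, hmt⟩
  have hD := (hasDerivAt_avgDelay_add_smul hl.2.ne (ℓ - l)).nonneg_of_frequently_le <|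
    (hnear.mono fun t ht => by simpa using isMinOn_iff.1 hmin _ ht).frequently
  simpa [mul_sub] using hD

theorem exists_avgDelay_le_dualValue {P l : 𝒳 → ℝ} {Lth : ℝ} (hP : ∀ x, 0 < P x)
    (hPsum : ∑ x, P x = 1) (hl : l ∈ feasibleSet P Lth)
    (hmin : IsMinOn (avgDelay P Lth) (feasibleSet P Lth) l) :
    ∃ z Q, 0 ≤ z ∧ (∀ x, 0 ≤ Q x) ∧ ∑ x, Q x = 1 ∧ avgDelay P Lth l ≤ dualValue P Lth z Q := by
  set m := ∑ x, P x * l x with hm_def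
  set s := ∑ x, P x * l x ^ 2 with hs_def
  have hd : 0 < Lth - m := sub_pos.2 hl.2
  rcases (show 0 ≤ s from sum_nonneg fun x _ => mul_nonneg (hP x).le (sq_nonneg (l x))).eq_or_lt
    with hs | hs
  · have hl0 := eq_zero_of_sum_mul_sq_eq_zero hP hs.symm
    have hg := dualWeight_pos (Q := P) hP le_rfl
    refine ⟨0, P, le_rfl, fun x => (hP x).le, hPsum, ?_⟩
    simpa [avgDelay, dualValue, hl0] using
      sum_nonneg fun x _ => mul_nonneg (hg x).le (shannonLength_nonneg hg x)
  -- the dual optimum: it makes `dualWeight P z Q` the gradient `delayGrad P Lth l`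
  set z := √s / (Lth - m) with hz_def
  set Q := fun x => P x * l x ^ 2 / s
  have hw : dualWeight P z Q = delayGrad P Lth l := by
    funext x
    have hsq : √(Q x * P x) = P x * l x / √s := by
      rw [show Q x * P x = (P x * l x) ^ 2 / s by simp only [Q]; ring, sqrt_div (sq_nonneg _),
        sqrt_sq (mul_nonneg (hP x).le (hl.1.1 x))]
    have : 0 < √s := sqrt_pos.2 hs
    rw [dualWeight, delayGrad, hsq, ← hm_def, ← hs_def, hz_def, div_pow, sq_sqrt hs.le]
    field_simp
  have hg : ∀ x, 0 < delayGrad P Lth l x := hw ▸ dualWeight_pos hP (by positivity)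
  have hfo := sum_delayGrad_mul_le_of_isMinOn hl hmin (shannonLength_mem_kraftLengths hg)
  have hval : ∑ x, delayGrad P Lth l x * l x - z ^ 2 / 2 * Lth = avgDelay P Lth l := by
    rw [sum_delayGrad_mul, avgDelay, ← hm_def, ← hs_def, hz_def, div_pow, sq_sqrt hs.le]
    field_simp
    ring
  refine ⟨z, Q, by positivity, fun x => div_nonneg (mul_nonneg (hP x).le (sq_nonneg _)) hs.le,
    ?_, ?_⟩
  · simp only [Q, ← sum_div]
    exact div_self hs.ne'
  · rw [dualValue, hw, ← hval]
    linarith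

end

end QueueingCode

open QueueingCode

theorem stmt_14_general {𝒳 : Type*} [Fintype 𝒳]
    (P : 𝒳 → ℝ) (hP : ∀ x, 0 < P x) (hPsum : ∑ x, P x = 1)
    (Lth : ℝ)
    (hH : (∑ x, P x * Real.logb 2 (1 / P x)) + Real.logb 2 (1 + 1 / Real.sqrt 2) < Lth) :
    sInf {c : ℝ | ∃ ℓ : 𝒳 → ℝ, (∀ x, 0 ≤ ℓ x) ∧ (∑ x, (2 : ℝ) ^ (-ℓ x) ≤ 1) ∧
        (∑ x, P x * ℓ x < Lth) ∧
        c = (∑ x, P x * ℓ x) + (∑ x, P x * ℓ x ^ 2) / (2 * (Lth - ∑ x, P x * ℓ x))} =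
    sSup {c : ℝ | ∃ z : ℝ, ∃ Q : 𝒳 → ℝ, 0 ≤ z ∧ (∀ x, 0 ≤ Q x) ∧ (∑ x, Q x = 1) ∧
        c = (∑ x, ((1 + z ^ 2 / 2) * P x + z * Real.sqrt (Q x * P x)) *
              Real.logb 2 ((∑ x', ((1 + z ^ 2 / 2) * P x' + z * Real.sqrt (Q x' * P x'))) /
                ((1 + z ^ 2 / 2) * P x + z * Real.sqrt (Q x * P x)))) -
            z ^ 2 / 2 * Lth} := by
  have hℓ₀ : shannonLength P ∈ feasibleSet P Lth := by
    have : 0 < logb 2 (1 + 1 / √2) := logb_pos one_lt_two (by simp)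
    refine ⟨shannonLength_mem_kraftLengths hP, ?_⟩
    simp only [Set.mem_ofPred_eq, shannonLength, hPsum]
    linarith
  obtain ⟨l, hl, hmin⟩ := exists_isMinOn_avgDelay hP hℓ₀
  obtain ⟨z, Q, hz, hQ, hQ1, hle⟩ := exists_avgDelay_le_dualValue hP hPsum hl hmin
  rw [IsLeast.csInf_eq (a := avgDelay P Lth l), IsGreatest.csSup_eq (a := avgDelay P Lth l)]
  · refine ⟨⟨z, Q, hz, hQ, hQ1, hle.antisymm ?_⟩, ?_⟩
    · exact dualValue_le_avgDelay hP hz hQ hQ1 hl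
    · rintro _ ⟨z, Q, hz, hQ, hQ1, rfl⟩
      exact dualValue_le_avgDelay hP hz hQ hQ1 hl
  · refine ⟨⟨l, hl.1.1, hl.1.2, hl.2, rfl⟩, ?_⟩
    rintro _ ⟨ℓ, hℓ0, hkraft, hm, rfl⟩
    exact isMinOn_iff.1 hmin ℓ ⟨⟨hℓ0, hkraft⟩, hm⟩

/-- Minmax–maxmin characterization for minimum average queuing delay (Theorem 6 of the
paper): under the condition `H(P) + log₂(1 + 1/√2) < L_th`, the infimum over length
functions `ℓ ∈ Λ` with `E[ℓ(X)] < L_th` of `E[ℓ(X)] + E[ℓ(X)²]/(2(L_th − E[ℓ(X)]))`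
equals the supremum over `z ≥ 0` and pmfs `Q` of
`Σ_x g_{z,Q,P}(x)·log₂(Σ_{x'} g_{z,Q,P}(x')/g_{z,Q,P}(x)) − (z²/2)·L_th`, where
`g_{z,Q,P}(x) = (1 + z²/2)P(x) + z√(Q(x)P(x))`. -/
theorem stmt_14 {𝒳 : Type*} [Fintype 𝒳] [Nonempty 𝒳]
    (P : 𝒳 → ℝ) (hP : ∀ x, 0 < P x) (hPsum : ∑ x, P x = 1)
    (Lth : ℝ) (hLth : 0 < Lth)
    (hH : (∑ x, P x * Real.logb 2 (1 / P x)) + Real.logb 2 (1 + 1 / Real.sqrt 2) < Lth) :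
    sInf {c : ℝ | ∃ ℓ : 𝒳 → ℝ, (∀ x, 0 ≤ ℓ x) ∧ (∑ x, (2 : ℝ) ^ (-ℓ x) ≤ 1) ∧
        (∑ x, P x * ℓ x < Lth) ∧
        c = (∑ x, P x * ℓ x) + (∑ x, P x * ℓ x ^ 2) / (2 * (Lth - ∑ x, P x * ℓ x))} =
    sSup {c : ℝ | ∃ z : ℝ, ∃ Q : 𝒳 → ℝ, 0 ≤ z ∧ (∀ x, 0 ≤ Q x) ∧ (∑ x, Q x = 1) ∧
        c = (∑ x, ((1 + z ^ 2 / 2) * P x + z * Real.sqrt (Q x * P x)) *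
              Real.logb 2 ((∑ x', ((1 + z ^ 2 / 2) * P x' + z * Real.sqrt (Q x' * P x'))) /
                ((1 + z ^ 2 / 2) * P x + z * Real.sqrt (Q x * P x)))) -
            z ^ 2 / 2 * Lth} :=
  stmt_14_general P hP hPsum Lth hH
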